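/- Let F ∈ C^{m,γ}(ℝⁿ) (m ≥ 1 integer, 0 ≤ γ ≤ 1) and let K ⊂ ℝⁿ be a compact set such that D^j F(x) = 0 for every x ∈ K and every multi-index j with 1 ≤ |j| ≤ m, and such that the image F(K) has Lebesgue measure zero; if γ > 0 assume in addition that lim_{ε→0⁺} |∇^m F|_{C^{0,γ}(K_ε)} = 0. For each ε > 0 choose finitely many disjoint open intervals covering F(K) with total length less than ε, let A_ε be their union, and define η_ε(t) := ∫_0^t 1_{A_ε}(s) ds. Define the jet f_ε = {f_ε^{(j)}}_{|j|≤m} on K by f_ε^{(0)} := η_ε ∘ (F|_K) and f_ε^{(j)} := 0 for 1 ≤ |j| ≤ m. Then ‖f_ε‖_{C^{m,γ}_jet(K)} ≤ δ(ε) for some function δ with δ(ε) → 0 as ε → 0⁺ (uniformly over all admissible choices of intervals). -/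

import Mathlib

open MeasureTheory Filter Topology Metric Set
open scoped ENNReal NNReal Classical

noncomputable section

namespace DFA

abbrev Euc (n : ℕ) := EuclideanSpace ℝ (Fin n)
abbrev E2 := EuclideanSpace ℝ (Fin 2)

/-- The `γ`-Hölder seminorm of `f` on the set `E`, valued in `ℝ≥0∞`. -/
def eHolder {X Y : Type*} [PseudoEMetricSpace X] [PseudoEMetricSpace Y]
    (γ : ℝ) (f : X → Y) (E : Set X) : ℝ≥0∞ :=
  ⨆ (x : X) (_ : x ∈ E) (y : X) (_ : y ∈ E) (_ : x ≠ y), edist (f x) (f y) / edist x y ^ γ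

/-- The finite set of multi-indices of order at most `m`. -/
def mIdx (n m : ℕ) : Finset (Fin n → ℕ) :=
  (Finset.Icc 0 (fun _ => m)).filter (fun j => (∑ i, j i) ≤ m)

/-- The `m`-th order Taylor polynomial of the jet `f` centred at `y`, evaluated at `x`. -/
def taylorPoly {n : ℕ} (m : ℕ) (f : (Fin n → ℕ) → Euc n → ℝ) (y x : Euc n) : ℝ :=
  ∑ j ∈ mIdx n m, (((∏ i, (j i).factorial : ℕ)) : ℝ)⁻¹ * f j y * ∏ i, (x i - y i) ^ j i

/-- The Taylor remainder `R_j f(x,y)` of order `m` of the jet `f`. -/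
def jetRem {n : ℕ} (m : ℕ) (f : (Fin n → ℕ) → Euc n → ℝ) (j : Fin n → ℕ)
    (x y : Euc n) : ℝ :=
  f j x - ∑ l ∈ (mIdx n m).filter (fun l => (∑ i, (j i + l i)) ≤ m),
    (((∏ i, (l i).factorial : ℕ)) : ℝ)⁻¹ * f (fun i => j i + l i) y * ∏ i, (x i - y i) ^ l i

/-- The `C^{m,γ}` jet norm of the jet `f` on `K`, valued in `ℝ≥0∞`:
the supremum over `|j| ≤ m` and `x ≠ y` in `K` of
`max {|f^{(j)}(x)|, |R_j f(x,y)| / |x-y|^{m+γ-|j|}}`. -/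
def jetNormE {n : ℕ} (m : ℕ) (γ : ℝ) (K : Set (Euc n))
    (f : (Fin n → ℕ) → Euc n → ℝ) : ℝ≥0∞ :=
  ⨆ (j : Fin n → ℕ) (_ : (∑ i, j i) ≤ m) (x : Euc n) (_ : x ∈ K),
    max (‖f j x‖₊ : ℝ≥0∞)
      (⨆ (y : Euc n) (_ : y ∈ K) (_ : x ≠ y),
        (‖jetRem m f j x y‖₊ : ℝ≥0∞) / edist x y ^ ((m : ℝ) + γ - (∑ i, j i : ℕ)))

/-- `A ⊆ ℝ` is the union of the finitely many pairwise disjoint open intervals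
`(a i, b i)`. -/
def IntervalFamily (N : ℕ) (a b : Fin N → ℝ) (A : Set ℝ) : Prop :=
  A = (⋃ i, Set.Ioo (a i) (b i)) ∧ (∀ i, a i < b i) ∧
    ∀ i i', i ≠ i' → Disjoint (Set.Ioo (a i) (b i)) (Set.Ioo (a i') (b i'))

/-- The monotone compression map `η_A(t) = ∫_0^t 1_A(s) ds`. -/
def etaComp (A : Set ℝ) (t : ℝ) : ℝ :=
  ∫ s in (0 : ℝ)..t, A.indicator (fun _ => (1 : ℝ)) s

/-! Taylor's formula at a point `y ∈ K`, where `D^i F(y) = 0` for `1 ≤ i ≤ m` and `∇^m F` is small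
near `K`, gives `|F(x) - F(y)| ≤ σ(r) |x - y|^{m+γ}` for `x, y ∈ K` with `|x - y| ≤ r`, where
`σ(r) → 0` as `r → 0`. The compression `η_ε` is `1`-Lipschitz and bounded by the total length `ε`
of the intervals. At distances `|x - y| ≤ ε^{1/(2(m+γ))}` the remainder of `η_ε ∘ F` is therefore
controlled by `σ`, and at larger distances it is at most `2ε ≤ 2√ε |x - y|^{m+γ}`. The higher
components of the jet vanish, so their remainders are zero. -/

lemma intervalIntegrable_indicator_one {A : Set ℝ} (hA : MeasurableSet A) (u v : ℝ) :
    IntervalIntegrable (A.indicator fun _ => (1 : ℝ)) volume u v := by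
  rw [intervalIntegrable_iff]
  exact (integrableOn_const measure_Ioc_lt_top.ne).indicator hA

lemma etaComp_sub {A : Set ℝ} (hA : MeasurableSet A) (s t : ℝ) :
    etaComp A s - etaComp A t = ∫ u in t..s, A.indicator (fun _ => (1 : ℝ)) u :=
  intervalIntegral.integral_interval_sub_left (intervalIntegrable_indicator_one hA 0 s)
    (intervalIntegrable_indicator_one hA 0 t)

lemma lipschitzWith_etaComp {A : Set ℝ} (hA : MeasurableSet A) : LipschitzWith 1 (etaComp A) := by
  refine LipschitzWith.of_dist_le_mul fun s t => ?_
  have h := intervalIntegral.norm_integral_le_of_norm_le_const (a := t) (b := s) (C := 1)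
    (f := A.indicator fun _ => (1 : ℝ)) fun u _ => by by_cases hu : u ∈ A <;> simp [hu]
  rw [Real.dist_eq, etaComp_sub hA, Real.dist_eq]
  simpa [abs_sub_comm] using h

lemma abs_etaComp_le {A : Set ℝ} (hA : MeasurableSet A) (hA' : volume A ≠ ⊤) (t : ℝ) :
    |etaComp A t| ≤ volume.real A := by
  rw [etaComp, ← Real.norm_eq_abs, intervalIntegral.norm_integral_eq_norm_integral_uIoc,
    integral_indicator hA, setIntegral_const, smul_eq_mul, mul_one, Real.norm_eq_abs,
    abs_of_nonneg measureReal_nonneg, measureReal_restrict_apply hA]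
  exact measureReal_mono inter_subset_left hA'

namespace IntervalFamily

variable {N : ℕ} {a b : Fin N → ℝ} {A : Set ℝ}

lemma measurableSet (h : IntervalFamily N a b A) : MeasurableSet A := by
  rw [h.1]
  exact .iUnion fun _ => measurableSet_Ioo

lemma volume_le (h : IntervalFamily N a b A) : volume A ≤ ENNReal.ofReal (∑ i, (b i - a i)) := by
  rw [h.1, ENNReal.ofReal_sum_of_nonneg fun i _ => sub_nonneg.2 (h.2.1 i).le]
  refine (measure_iUnion_fintype_le _ _).trans_eq ?_
  simp only [Real.volume_Ioo]

lemma abs_etaComp_le (h : IntervalFamily N a b A) (t : ℝ) : |etaComp A t| ≤ ∑ i, (b i - a i) :=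
  calc |etaComp A t| ≤ volume.real A :=
        DFA.abs_etaComp_le h.measurableSet (ne_top_of_le_ne_top ENNReal.ofReal_ne_top h.volume_le) t
    _ ≤ ∑ i, (b i - a i) :=
        ENNReal.toReal_le_of_le_ofReal (Finset.sum_nonneg fun i _ => sub_nonneg.2 (h.2.1 i).le)
          h.volume_le

end IntervalFamily

section Flat

variable {X Y : Type*} [PseudoMetricSpace X] [PseudoMetricSpace Y]

def IsFlatOn (p : ℝ) (F : X → Y) (K : Set X) : Prop :=
  ∀ d > 0, ∃ r > 0, ∀ x ∈ K, ∀ y ∈ K, dist x y ≤ r → dist (F x) (F y) ≤ d * dist x y ^ p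

variable {p : ℝ} {F : X → Y} {K : Set X}

lemma IsFlatOn.exists_bound (hF : IsFlatOn p F K) (hK : IsCompact K) (hFc : ContinuousOn F K)
    (hp : 0 ≤ p) : ∃ C, ∀ x ∈ K, ∀ y ∈ K, dist (F x) (F y) ≤ C * dist x y ^ p := by
  obtain ⟨r, hr, hFr⟩ := hF 1 one_pos
  obtain ⟨D, hD⟩ := Metric.isBounded_iff.1 (hK.image_of_continuousOn hFc).isBounded
  refine ⟨max 1 (D / r ^ p), fun x hx y hy => ?_⟩
  rcases le_or_gt (dist x y) r with hxy | hxy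
  · exact (hFr x hx y hy hxy).trans (by gcongr; exact le_max_left _ _)
  · have hrp : 0 < r ^ p := Real.rpow_pos_of_pos hr p
    calc dist (F x) (F y) ≤ D := hD (mem_image_of_mem F hx) (mem_image_of_mem F hy)
      _ = D / r ^ p * r ^ p := by field_simp
      _ ≤ max 1 (D / r ^ p) * dist x y ^ p := by
        have hD0 : 0 ≤ D := dist_nonneg.trans (hD (mem_image_of_mem F hx) (mem_image_of_mem F hx))
        gcongr
        exact le_max_right _ _

/-- `σ r` is the best constant at scale `r`; the uniform bound makes the defining sets nonempty. -/
lemma IsFlatOn.exists_modulus (hF : IsFlatOn p F K) (hK : IsCompact K) (hFc : ContinuousOn F K)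
    (hp : 0 ≤ p) :
    ∃ σ : ℝ → ℝ, Tendsto σ (𝓝[>] 0) (𝓝 0) ∧ ∀ r, 0 ≤ σ r ∧
      ∀ x ∈ K, ∀ y ∈ K, dist x y ≤ r → dist (F x) (F y) ≤ σ r * dist x y ^ p := by
  obtain ⟨C, hC⟩ := hF.exists_bound hK hFc hp
  set S : ℝ → Set ℝ := fun r => {c | 0 ≤ c ∧
    ∀ x ∈ K, ∀ y ∈ K, dist x y ≤ r → dist (F x) (F y) ≤ c * dist x y ^ p}
  have hS : ∀ r, (S r).Nonempty := fun r =>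
    ⟨max C 0, le_max_right _ _, fun x hx y hy _ =>
      (hC x hx y hy).trans (mul_le_mul_of_nonneg_right (le_max_left _ _)
        (Real.rpow_nonneg dist_nonneg _))⟩
  have hS0 : ∀ r, BddBelow (S r) := fun r => ⟨0, fun c hc => hc.1⟩
  refine ⟨fun r => sInf (S r), ?_, fun r => ⟨le_csInf (hS r) fun c hc => hc.1, ?_⟩⟩
  · rw [Metric.tendsto_nhdsWithin_nhds]
    intro e he
    obtain ⟨r, hr, hFr⟩ := hF (e / 2) (half_pos he)
    refine ⟨r, hr, fun r' hr' hr'r => ?_⟩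
    rw [Real.dist_eq, sub_zero, abs_of_pos (mem_Ioi.1 hr')] at hr'r
    rw [Real.dist_eq, sub_zero]
    have hσ : sInf (S r') ≤ e / 2 := csInf_le (hS0 r')
      ⟨(half_pos he).le, fun x hx y hy hxy => hFr x hx y hy (hxy.trans hr'r.le)⟩
    rw [abs_of_nonneg (le_csInf (hS r') fun c hc => hc.1)]
    linarith
  · intro x hx y hy hxy
    rcases (Real.rpow_nonneg (dist_nonneg (x := x) (y := y)) p).eq_or_lt with h0 | hpos
    · obtain ⟨c, -, hc⟩ := hS r
      simpa [← h0] using hc x hx y hy hxy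
    · rw [← div_le_iff₀ hpos]
      exact le_csInf (hS r) fun c hc => (div_le_iff₀ hpos).2 (hc.2 x hx y hy hxy)

end Flat

lemma tendsto_rpow_nhdsGT_zero {p : ℝ} (hp : 0 < p) :
    Tendsto (fun ε : ℝ => ε ^ p) (𝓝[>] 0) (𝓝[>] 0) := by
  refine tendsto_nhdsWithin_iff.2 ⟨?_, eventually_mem_nhdsWithin.mono fun x hx =>
    Real.rpow_pos_of_pos hx p⟩
  have h := (Real.continuousAt_rpow_const 0 p (Or.inr hp.le)).tendsto
  rw [Real.zero_rpow hp.ne'] at h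
  exact h.mono_left nhdsWithin_le_nhds

/-- Below the scale `ε ^ (2p)⁻¹` the Lipschitz bound on `η` is used, above it the sup bound:
there `2ε ≤ 2√ε · dist x y ^ p`. -/
lemma abs_comp_sub_comp_le {X : Type*} [PseudoMetricSpace X] {F : X → ℝ} {K : Set X}
    {η : ℝ → ℝ} {p σ ε : ℝ} (hη : LipschitzWith 1 η) (hηε : ∀ t, |η t| ≤ ε) (hp : 0 < p)
    (hσ : 0 ≤ σ) (hF : ∀ x ∈ K, ∀ y ∈ K, dist x y ≤ ε ^ (2 * p)⁻¹ →
      dist (F x) (F y) ≤ σ * dist x y ^ p)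
    {x y : X} (hx : x ∈ K) (hy : y ∈ K) :
    |η (F x) - η (F y)| ≤ (σ + 2 * √ε) * dist x y ^ p := by
  have hε : 0 ≤ ε := (abs_nonneg _).trans (hηε 0)
  have hdp : 0 ≤ dist x y ^ p := Real.rpow_nonneg dist_nonneg p
  have hsq : 0 ≤ √ε := Real.sqrt_nonneg ε
  rcases le_or_gt (dist x y) (ε ^ (2 * p)⁻¹) with hxy | hxy
  · calc |η (F x) - η (F y)| ≤ dist (F x) (F y) := by
          simpa [← Real.dist_eq] using hη.dist_le_mul (F x) (F y)
      _ ≤ σ * dist x y ^ p := hF x hx y hy hxy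
      _ ≤ (σ + 2 * √ε) * dist x y ^ p := by gcongr; linarith
  · have hscale : √ε ≤ dist x y ^ p := by
      calc √ε = (ε ^ (2 * p)⁻¹) ^ p := by
            rw [← Real.rpow_mul hε, Real.sqrt_eq_rpow]
            congr 1
            field_simp
        _ ≤ dist x y ^ p := Real.rpow_le_rpow (Real.rpow_nonneg hε _) hxy.le hp.le
    calc |η (F x) - η (F y)| ≤ |η (F x)| + |η (F y)| := abs_sub _ _
      _ ≤ 2 * √ε * √ε := by rw [mul_assoc, Real.mul_self_sqrt hε]; linarith [hηε (F x), hηε (F y)]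
      _ ≤ (σ + 2 * √ε) * dist x y ^ p := by
        rw [add_mul]
        nlinarith [mul_nonneg hσ hdp]

section Taylor

variable {E G : Type*} [NormedAddCommGroup E] [NormedSpace ℝ E] [NormedAddCommGroup G]
  [NormedSpace ℝ G]

lemma norm_sub_le_of_norm_fderiv_le_on_closedBall {f : E → G} (hf : Differentiable ℝ f)
    {y z : E} {ρ C : ℝ} (hC : ∀ w ∈ closedBall y ρ, ‖fderiv ℝ f w‖ ≤ C)
    (hz : z ∈ closedBall y ρ) : ‖f z - f y‖ ≤ C * ρ := by
  have hy : y ∈ closedBall y ρ := mem_closedBall_self (dist_nonneg.trans hz)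
  calc ‖f z - f y‖ ≤ C * ‖z - y‖ :=
        (convex_closedBall y ρ).norm_image_sub_le_of_norm_fderiv_le
          (fun w _ => hf.differentiableAt) hC hy hz
    _ ≤ C * ρ := by
        gcongr
        · exact (norm_nonneg _).trans (hC y hy)
        · rwa [← dist_eq_norm]

variable {f : E → G} {m : ℕ} {y : E} {ρ A : ℝ}

/-- Downward induction on the order: the mean value inequality passes the bound from
`D^(j+1) f` to `D^j f`, which vanishes at `y` for `1 ≤ j < m`. -/
lemma norm_iteratedFDeriv_le_of_iteratedFDeriv_eq_zero (hf : ContDiff ℝ m f)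
    (h0 : ∀ i, 1 ≤ i → i < m → iteratedFDeriv ℝ i f y = 0)
    (hA : ∀ w ∈ closedBall y ρ, ‖iteratedFDeriv ℝ m f w‖ ≤ A) :
    ∀ i < m, ∀ w ∈ closedBall y ρ, ‖iteratedFDeriv ℝ (m - i) f w‖ ≤ A * ρ ^ i := by
  intro i
  induction i with
  | zero => simpa using fun _ => hA
  | succ i ih =>
    intro hi w hw
    have hdiff : Differentiable ℝ (iteratedFDeriv ℝ (m - (i + 1)) f) :=
      hf.differentiable_iteratedFDeriv (by exact_mod_cast (show m - (i + 1) < m by omega))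
    have hbound : ∀ v ∈ closedBall y ρ,
        ‖fderiv ℝ (iteratedFDeriv ℝ (m - (i + 1)) f) v‖ ≤ A * ρ ^ i := fun v hv => by
      rw [norm_fderiv_iteratedFDeriv, show m - (i + 1) + 1 = m - i by omega]
      exact ih (by omega) v hv
    have h := norm_sub_le_of_norm_fderiv_le_on_closedBall hdiff hbound hw
    rw [h0 _ (by omega) (by omega), sub_zero] at h
    exact h.trans_eq (by ring)

lemma norm_sub_le_of_iteratedFDeriv_eq_zero (hm : 1 ≤ m) (hf : ContDiff ℝ m f)
    (h0 : ∀ i, 1 ≤ i → i < m → iteratedFDeriv ℝ i f y = 0)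
    (hA : ∀ w ∈ closedBall y ρ, ‖iteratedFDeriv ℝ m f w‖ ≤ A) {z : E}
    (hz : z ∈ closedBall y ρ) : ‖f z - f y‖ ≤ A * ρ ^ m := by
  have hbound : ∀ w ∈ closedBall y ρ, ‖fderiv ℝ f w‖ ≤ A * ρ ^ (m - 1) := fun w hw => by
    have h := norm_iteratedFDeriv_le_of_iteratedFDeriv_eq_zero hf h0 hA (m - 1) (by omega) w hw
    rwa [Nat.sub_sub_self hm, norm_iteratedFDeriv_one] at h
  calc ‖f z - f y‖ ≤ A * ρ ^ (m - 1) * ρ :=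
        norm_sub_le_of_norm_fderiv_le_on_closedBall
          (hf.differentiable (by exact_mod_cast (show m ≠ 0 by omega))) hbound hz
    _ = A * ρ ^ m := by rw [mul_assoc, ← pow_succ, Nat.sub_add_cancel hm]

end Taylor

lemma edist_le_eHolder_mul_edist_rpow {X Y : Type*} [MetricSpace X] [PseudoEMetricSpace Y]
    {γ : ℝ} {f : X → Y} {S : Set X} {x y : X} (hx : x ∈ S) (hy : y ∈ S) :
    edist (f x) (f y) ≤ eHolder γ f S * edist x y ^ γ := by
  rcases eq_or_ne x y with rfl | hxy
  · simp
  have hpos : 0 < edist x y := edist_pos.2 hxy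
  rw [← ENNReal.div_le_iff (ENNReal.rpow_pos hpos (edist_ne_top x y)).ne'
    (ENNReal.rpow_ne_top_of_ne_zero hpos.ne' (edist_ne_top x y))]
  exact le_iSup₂_of_le x hx <| le_iSup₂_of_le y hy <| le_iSup_of_le hxy le_rfl

section VanishingNear

variable {X Y : Type*} [MetricSpace X] [SeminormedAddCommGroup Y] {G : X → Y} {K : Set X}
  {d : ℝ}

lemma exists_norm_le_of_eHolder_thickening_tendsto_zero {γ : ℝ} (hγ : 0 ≤ γ)
    (hG : ∀ y ∈ K, G y = 0)
    (hlim : Tendsto (fun ε => eHolder γ G (thickening ε K)) (𝓝[>] 0) (𝓝 0)) (hd : 0 < d) :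
    ∃ r > 0, ∀ y ∈ K, ∀ z, dist z y ≤ r → ‖G z‖ ≤ d * dist z y ^ γ := by
  obtain ⟨ε, hεd, hε⟩ :=
    ((hlim.eventually (gt_mem_nhds (ENNReal.ofReal_pos.2 hd))).and self_mem_nhdsWithin).exists
  refine ⟨ε / 2, half_pos hε, fun y hy z hz => ?_⟩
  have hyK : y ∈ thickening ε K := self_subset_thickening hε K hy
  have hzK : z ∈ thickening ε K :=
    mem_thickening_iff.2 ⟨y, hy, hz.trans_lt (half_lt_self hε)⟩
  have h := (edist_le_eHolder_mul_edist_rpow (f := G) hzK hyK).trans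
    (mul_le_mul_left hεd.le _)
  rw [hG y hy, edist_dist, edist_dist, dist_zero_right,
    ENNReal.ofReal_rpow_of_nonneg dist_nonneg hγ, ← ENNReal.ofReal_mul hd.le,
    ENNReal.ofReal_le_ofReal_iff (by positivity)] at h
  exact h

lemma exists_norm_le_of_isCompact_of_eq_zero (hGc : Continuous G) (hK : IsCompact K)
    (hG : ∀ y ∈ K, G y = 0) (hd : 0 < d) :
    ∃ r > 0, ∀ y ∈ K, ∀ z, dist z y ≤ r → ‖G z‖ ≤ d := by
  obtain ⟨r, hr, hrU⟩ := hK.exists_thickening_subset_open (isOpen_lt hGc.norm continuous_const)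
    (fun y hy => by simp [hG y hy, hd] : K ⊆ {z | ‖G z‖ < d})
  exact ⟨r / 2, half_pos hr, fun y hy z hz =>
    (hrU (mem_thickening_iff.2 ⟨y, hy, hz.trans_lt (half_lt_self hr)⟩)).le⟩

end VanishingNear

theorem isFlatOn_of_iteratedFDeriv_eq_zero {E G : Type*} [NormedAddCommGroup E]
    [NormedSpace ℝ E] [NormedAddCommGroup G] [NormedSpace ℝ G] {F : E → G} {K : Set E}
    {m : ℕ} {γ : ℝ} (hm : 1 ≤ m) (hγ : 0 ≤ γ) (hF : ContDiff ℝ m F) (hK : IsCompact K)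
    (hzero : ∀ x ∈ K, ∀ i : ℕ, 1 ≤ i → i ≤ m → iteratedFDeriv ℝ i F x = 0)
    (hlim : 0 < γ → Tendsto (fun ε => eHolder γ (iteratedFDeriv ℝ m F)
      (thickening ε K)) (𝓝[>] 0) (𝓝 0)) :
    IsFlatOn (m + γ) F K := by
  intro d hd
  obtain ⟨r, hr, hsmall⟩ : ∃ r > 0, ∀ y ∈ K, ∀ z, dist z y ≤ r →
      ‖iteratedFDeriv ℝ m F z‖ ≤ d * dist z y ^ γ := by
    rcases hγ.lt_or_eq with hγ | rfl
    · exact exists_norm_le_of_eHolder_thickening_tendsto_zero hγ.le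
        (fun y hy => hzero y hy m hm le_rfl) (hlim hγ) hd
    · simpa using exists_norm_le_of_isCompact_of_eq_zero (hF.continuous_iteratedFDeriv le_rfl)
        hK (fun y hy => hzero y hy m hm le_rfl) hd
  refine ⟨r, hr, fun x hx y hy hxy => ?_⟩
  have hA : ∀ w ∈ closedBall y (dist x y), ‖iteratedFDeriv ℝ m F w‖ ≤ d * dist x y ^ γ :=
    fun w hw => (hsmall y hy w (le_trans hw hxy)).trans (by gcongr; exact hw)
  calc dist (F x) (F y) ≤ d * dist x y ^ γ * dist x y ^ m := by
        rw [dist_eq_norm]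
        exact norm_sub_le_of_iteratedFDeriv_eq_zero hm hF
          (fun i hi him => hzero y hy i hi him.le) hA (mem_closedBall.2 le_rfl)
    _ = d * dist x y ^ ((m : ℝ) + γ) := by
        rw [Real.rpow_add' dist_nonneg (by positivity), Real.rpow_natCast]
        ring

section Jet

variable {n m : ℕ}

def valueJet (g : Euc n → ℝ) : (Fin n → ℕ) → Euc n → ℝ :=
  fun j x => if j = 0 then g x else 0

lemma jetRem_valueJet_of_ne_zero (g : Euc n → ℝ) {j : Fin n → ℕ} (hj : j ≠ 0) (x y : Euc n) :
    jetRem m (valueJet g) j x y = 0 := by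
  have hjl : ∀ l : Fin n → ℕ, (fun i => j i + l i) ≠ 0 := fun l h =>
    hj (funext fun i => (Nat.add_eq_zero_iff.1 (congrFun h i)).1)
  simp [jetRem, valueJet, hj, hjl]

lemma jetRem_valueJet_zero (g : Euc n → ℝ) (x y : Euc n) :
    jetRem m (valueJet g) 0 x y = g x - g y := by
  have h0 : (0 : Fin n → ℕ) ∈ (mIdx n m).filter (fun l => ∑ i, l i ≤ m) := by
    simp [mIdx]
  simp only [jetRem, Pi.zero_apply, zero_add]
  rw [Finset.sum_eq_single_of_mem 0 h0 fun l _ hl => by simp [valueJet, hl]]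
  simp [valueJet, Pi.zero_def]

lemma jetNormE_valueJet_le {γ : ℝ} {K : Set (Euc n)} {g : Euc n → ℝ} {C : ℝ}
    (hg : ∀ x ∈ K, |g x| ≤ C)
    (hgg : ∀ x ∈ K, ∀ y ∈ K, |g x - g y| ≤ C * dist x y ^ ((m : ℝ) + γ)) :
    jetNormE m γ K (valueJet g) ≤ ENNReal.ofReal C := by
  have hnorm : ∀ {r c : ℝ}, |r| ≤ c → (‖r‖₊ : ℝ≥0∞) ≤ ENNReal.ofReal c := fun h => by
    rw [← enorm_eq_nnnorm, ← ofReal_norm, Real.norm_eq_abs]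
    exact ENNReal.ofReal_le_ofReal h
  refine iSup₂_le fun j _ => iSup₂_le fun x hx => max_le ?_ ?_
  · by_cases hj : j = 0
    · simpa [valueJet, hj] using hnorm (hg x hx)
    · simp [valueJet, hj]
  refine iSup₂_le fun y hy => iSup_le fun hxy => ?_
  by_cases hj : j = 0
  · subst hj
    have hC : 0 ≤ C := (abs_nonneg _).trans (hg x hx)
    rw [jetRem_valueJet_zero, edist_dist, ENNReal.ofReal_rpow_of_pos (dist_pos.2 hxy)]
    refine ENNReal.div_le_of_le_mul ?_
    rw [← ENNReal.ofReal_mul hC]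
    simpa using hnorm (hgg x hx y hy)
  · simp [jetRem_valueJet_of_ne_zero _ hj]

end Jet

theorem monotone_compression_holder_general
    (n m : ℕ) (hm : 1 ≤ m) (γ : ℝ) (hγ0 : 0 ≤ γ)
    (F : Euc n → ℝ) (hF : ContDiff ℝ m F)
    (K : Set (Euc n)) (hK : IsCompact K)
    (hzero : ∀ x ∈ K, ∀ i : ℕ, 1 ≤ i → i ≤ m → iteratedFDeriv ℝ i F x = 0)
    (hlim : 0 < γ → Tendsto (fun ε => eHolder γ (iteratedFDeriv ℝ m F)
      (Metric.thickening ε K)) (𝓝[>] (0 : ℝ)) (𝓝 0)) :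
    ∃ δ : ℝ → ℝ, Tendsto δ (𝓝[>] (0 : ℝ)) (𝓝 0) ∧
      ∀ ε : ℝ, 0 < ε → ∀ (N : ℕ) (a b : Fin N → ℝ) (A : Set ℝ),
        IntervalFamily N a b A → F '' K ⊆ A → (∑ i, (b i - a i)) < ε →
        jetNormE m γ K (fun j x => if j = 0 then etaComp A (F x) else 0) ≤
          ENNReal.ofReal (δ ε) := by
  have hp : 0 < (m : ℝ) + γ := by positivity
  obtain ⟨σ, hσ, hσF⟩ := (isFlatOn_of_iteratedFDeriv_eq_zero hm hγ0 hF hK hzero hlim).exists_modulus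
    hK hF.continuous.continuousOn hp.le
  refine ⟨fun ε => ε + σ (ε ^ (2 * ((m : ℝ) + γ))⁻¹) + 2 * √ε, ?_, ?_⟩
  · have hsqrt : Tendsto (fun ε : ℝ => √ε) (𝓝[>] 0) (𝓝 0) := by
      simpa using (Real.continuous_sqrt.tendsto 0).mono_left nhdsWithin_le_nhds
    simpa using ((tendsto_id.mono_left nhdsWithin_le_nhds).add
      (hσ.comp (tendsto_rpow_nhdsGT_zero (by positivity)))).add (hsqrt.const_mul 2)
  intro ε hε N a b A hA _ hlen
  have hη : ∀ t, |etaComp A t| ≤ ε := fun t => (hA.abs_etaComp_le t).trans hlen.le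
  refine jetNormE_valueJet_le (fun x _ => ?_) fun x hx y hy => ?_
  · linarith [hη (F x), (hσF (ε ^ (2 * ((m : ℝ) + γ))⁻¹)).1, Real.sqrt_nonneg ε]
  calc |etaComp A (F x) - etaComp A (F y)|
      ≤ (σ (ε ^ (2 * ((m : ℝ) + γ))⁻¹) + 2 * √ε) * dist x y ^ ((m : ℝ) + γ) :=
        abs_comp_sub_comp_le (lipschitzWith_etaComp hA.measurableSet) hη hp
          (hσF _).1 (hσF _).2 hx hy
    _ ≤ _ := by gcongr; linarith

/-- **Monotone compression in Hölder spaces** (Lemma 5.1). Let `F ∈ C^{m,γ}(ℝⁿ)` with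
`D^j F = 0` on the compact set `K` for `1 ≤ |j| ≤ m`, `|F(K)| = 0`, and (if `γ > 0`)
`|∇^m F|_{C^{0,γ}(K_ε)} → 0`. Then the compressed jets
`f_ε = {η_ε ∘ F|_K, 0, …, 0}`, built from any finite family of disjoint open intervals
covering `F(K)` with total length `< ε`, satisfy `‖f_ε‖_{C^{m,γ}_jet(K)} ≤ δ(ε)` with
`δ(ε) → 0` as `ε → 0⁺`. -/
theorem monotone_compression_holder
    (n m : ℕ) (hm : 1 ≤ m) (γ : ℝ) (hγ0 : 0 ≤ γ) (hγ1 : γ ≤ 1)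
    (F : Euc n → ℝ) (hF : ContDiff ℝ m F)
    (hFγ : 0 < γ → eHolder γ (iteratedFDeriv ℝ m F) Set.univ < ⊤)
    (K : Set (Euc n)) (hK : IsCompact K)
    (hzero : ∀ x ∈ K, ∀ i : ℕ, 1 ≤ i → i ≤ m → iteratedFDeriv ℝ i F x = 0)
    (himg : volume (F '' K) = 0)
    (hlim : 0 < γ → Tendsto (fun ε => eHolder γ (iteratedFDeriv ℝ m F)
      (Metric.thickening ε K)) (𝓝[>] (0 : ℝ)) (𝓝 0)) :
    ∃ δ : ℝ → ℝ, Tendsto δ (𝓝[>] (0 : ℝ)) (𝓝 0) ∧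
      ∀ ε : ℝ, 0 < ε → ∀ (N : ℕ) (a b : Fin N → ℝ) (A : Set ℝ),
        IntervalFamily N a b A → F '' K ⊆ A → (∑ i, (b i - a i)) < ε →
        jetNormE m γ K (fun j x => if j = 0 then etaComp A (F x) else 0) ≤
          ENNReal.ofReal (δ ε) :=
  monotone_compression_holder_general n m hm γ hγ0 F hF K hK hzero hlim

end DFA
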